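/- Incremental cyclo-dissipativity of the exponentially-scaled averaging reactive power (E-ARP) controller (Theorem 1, item 4): let L_Q ∈ ℝ^{n×n} be symmetric positive semidefinite (the Laplacian of an undirected connected communication graph), let (θ̄, ω̄, V̄) satisfy V̄ ∈ ℝⁿ_{>0} and ω̄ = ω⁰·1 for some ω⁰ ∈ ℝ, put P̄ := P(θ̄,V̄), Q̄ := Q(θ̄,V̄), let ū_P ∈ ℝⁿ satisfy 0 = −(ω̄ − ω*) − K_P(P̄ − P*) + ū_P, and set ū_Q := K_Q L_Q K_Q Q̄. Then for every θ ∈ ℝⁿ, ω ∈ ℝⁿ, V ∈ ℝⁿ_{>0} and u_P, u_Q ∈ ℝⁿ, defining g := [V]⁻¹ (Q(θ,V) − Q̄), the following identity holds: (P(θ,V) − P̄)ᵀ ω + (ω − ω̄)ᵀ K_P⁻¹ (−(ω − ω*) − K_P(P(θ,V) − P*) + u_P) + gᵀ (−[V] K_Q L_Q K_Q Q(θ,V) + [V] u_Q) = −(ω − ω̄)ᵀ K_P⁻¹ (ω − ω̄) + (ω − ω̄)ᵀ K_P⁻¹ (u_P − ū_P) − gᵀ [V] K_Q L_Q K_Q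 [V] g + gᵀ [V] (u_Q − ū_Q). -/

import Mathlib

open Real Finset Matrix

/-- `B_ii = b̂_i + ∑_{j ≠ i} B_ij`. -/
noncomputable def Bdiag (n : ℕ) (B : Fin n → Fin n → ℝ) (bhat : Fin n → ℝ) (i : Fin n) : ℝ :=
  bhat i + ∑ j ∈ Finset.univ.erase i, B i j

/-- Active power `P_i(θ,V) = ∑_{j ≠ i} B_ij V_i V_j sin(θ_i − θ_j)`. -/
noncomputable def activeP (n : ℕ) (B : Fin n → Fin n → ℝ) (θ V : Fin n → ℝ) (i : Fin n) : ℝ :=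
  ∑ j ∈ Finset.univ.erase i, B i j * V i * V j * Real.sin (θ i - θ j)

/-- Reactive power `Q_i(θ,V) = B_ii V_i² − ∑_{j ≠ i} B_ij V_i V_j cos(θ_i − θ_j)`. -/
noncomputable def reactiveQ (n : ℕ) (B : Fin n → Fin n → ℝ) (bhat : Fin n → ℝ)
    (θ V : Fin n → ℝ) (i : Fin n) : ℝ :=
  Bdiag n B bhat i * V i ^ 2
    - ∑ j ∈ Finset.univ.erase i, B i j * V i * V j * Real.cos (θ i - θ j)

/-! The identity splits into a frequency part and a voltage part. The frequency part reduces,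
term by term, to the claimed quadratic form up to the summand `(P_i - P̄_i) ω⁰`, which sums to
zero because a lossless network has `∑ᵢ Pᵢ = 0`, the sine being odd. The voltage part follows
from `[V] g = Q - Q̄` and linearity of `L_Q`. -/

theorem Finset.sum_sum_eq_zero_of_antisymm {ι M : Type*} [Fintype ι] [AddCommGroup M]
    [IsAddTorsionFree M] (f : ι → ι → M) (hf : ∀ i j, f j i = -f i j) :
    ∑ i, ∑ j, f i j = 0 := by
  refine self_eq_neg.mp ?_
  calc ∑ i, ∑ j, f i j = ∑ j, ∑ i, f i j := Finset.sum_comm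
    _ = ∑ j, ∑ i, -f j i :=
      Finset.sum_congr rfl fun j _ => Finset.sum_congr rfl fun i _ => hf j i
    _ = -∑ i, ∑ j, f i j := by simp only [Finset.sum_neg_distrib]

theorem activeP_eq_sum (n : ℕ) (B : Fin n → Fin n → ℝ) (θ V : Fin n → ℝ) (i : Fin n) :
    activeP n B θ V i = ∑ j, B i j * V i * V j * Real.sin (θ i - θ j) :=
  Finset.sum_erase _ (by simp)

theorem sum_activeP_eq_zero (n : ℕ) (B : Fin n → Fin n → ℝ) (hBsymm : ∀ i j, B i j = B j i)
    (θ V : Fin n → ℝ) : ∑ i, activeP n B θ V i = 0 := by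
  simp only [activeP_eq_sum]
  refine Finset.sum_sum_eq_zero_of_antisymm _ fun i j => ?_
  rw [hBsymm j i, ← neg_sub (θ i), Real.sin_neg]
  ring

section Dissipation

variable {ι : Type*} [Fintype ι]

theorem frequency_dissipation_eq (kP ω ωstar P Pbar Pstar uP uPbar : ι → ℝ) (ω0 : ℝ)
    (hkP : ∀ i, kP i ≠ 0) (hP : ∑ i, P i = ∑ i, Pbar i)
    (huPbar : ∀ i, 0 = -(ω0 - ωstar i) - kP i * (Pbar i - Pstar i) + uPbar i) :
    ∑ i, (P i - Pbar i) * ω i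
      + ∑ i, (ω i - ω0) * (kP i)⁻¹ * (-(ω i - ωstar i) - kP i * (P i - Pstar i) + uP i)
    = -∑ i, (ω i - ω0) * (kP i)⁻¹ * (ω i - ω0)
      + ∑ i, (ω i - ω0) * (kP i)⁻¹ * (uP i - uPbar i) := by
  have hterm : ∀ i, (P i - Pbar i) * ω i
      + (ω i - ω0) * (kP i)⁻¹ * (-(ω i - ωstar i) - kP i * (P i - Pstar i) + uP i)
      = -((ω i - ω0) * (kP i)⁻¹ * (ω i - ω0)) + (ω i - ω0) * (kP i)⁻¹ * (uP i - uPbar i)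
        + (P i - Pbar i) * ω0 := by
    intro i
    rw [show uPbar i = (ω0 - ωstar i) + kP i * (Pbar i - Pstar i) by linarith [huPbar i]]
    field_simp [hkP i]
    ring
  have hlossless : ∑ i, (P i - Pbar i) * ω0 = 0 := by
    rw [← Finset.sum_mul, Finset.sum_sub_distrib, hP, sub_self, zero_mul]
  rw [← Finset.sum_add_distrib, Finset.sum_congr rfl fun i _ => hterm i,
    Finset.sum_add_distrib, hlossless, add_zero, Finset.sum_add_distrib, Finset.sum_neg_distrib]

theorem voltage_dissipation_eq (L : Matrix ι ι ℝ) (kQ V g Q Qbar uQ : ι → ℝ)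
    (hVg : ∀ i, V i * g i = Q i - Qbar i) :
    ∑ i, g i * (-(V i * (kQ i * (L *ᵥ fun j => kQ j * Q j) i)) + V i * uQ i)
    = -∑ i, (V i * (kQ i * g i)) * (L *ᵥ fun j => kQ j * (V j * g j)) i
      + ∑ i, g i * (V i * (uQ i - kQ i * (L *ᵥ fun j => kQ j * Qbar j) i)) := by
  have hsplit : (fun j => kQ j * Q j)
      = (fun j => kQ j * (V j * g j)) + fun j => kQ j * Qbar j := by
    funext j
    simp only [Pi.add_apply, hVg]
    ring
  rw [hsplit, Matrix.mulVec_add, ← Finset.sum_neg_distrib, ← Finset.sum_add_distrib]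
  refine Finset.sum_congr rfl fun i _ => ?_
  simp only [Pi.add_apply]
  ring

end Dissipation

theorem earp_incremental_cyclo_dissipativity_general
    (n : ℕ)
    (B : Fin n → Fin n → ℝ)
    (hBsymm : ∀ i j, B i j = B j i)
    (bhat : Fin n → ℝ)
    (kP kQ : Fin n → ℝ)
    (hkP : ∀ i, 0 < kP i)
    (LQ : Matrix (Fin n) (Fin n) ℝ)
    (ωstar Pstar : Fin n → ℝ)
    (θbar ωbar Vbar : Fin n → ℝ) (ω0 : ℝ)
    (hωbar : ωbar = fun _ => ω0)
    (uPbar uQbar : Fin n → ℝ)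
    (huPbar : ∀ i, 0 = -(ωbar i - ωstar i)
        - kP i * (activeP n B θbar Vbar i - Pstar i) + uPbar i)
    (huQbar : uQbar
        = fun i => kQ i * (LQ *ᵥ fun j => kQ j * reactiveQ n B bhat θbar Vbar j) i)
    (θ ω V uP uQ : Fin n → ℝ) (hV : ∀ i, 0 < V i)
    (g : Fin n → ℝ)
    (hg : ∀ i, g i = (reactiveQ n B bhat θ V i - reactiveQ n B bhat θbar Vbar i) / V i) :
    ∑ i, (activeP n B θ V i - activeP n B θbar Vbar i) * ω i
      + ∑ i, (ω i - ωbar i) * (kP i)⁻¹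
          * (-(ω i - ωstar i) - kP i * (activeP n B θ V i - Pstar i) + uP i)
      + ∑ i, g i * (-(V i * (kQ i * (LQ *ᵥ fun j => kQ j * reactiveQ n B bhat θ V j) i))
          + V i * uQ i)
    =
    -∑ i, (ω i - ωbar i) * (kP i)⁻¹ * (ω i - ωbar i)
      + ∑ i, (ω i - ωbar i) * (kP i)⁻¹ * (uP i - uPbar i)
      - ∑ i, (V i * (kQ i * g i)) * (LQ *ᵥ fun j => kQ j * (V j * g j)) i
      + ∑ i, g i * (V i * (uQ i - uQbar i)) := by
  subst hωbar huQbar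
  have hVg : ∀ i, V i * g i = reactiveQ n B bhat θ V i - reactiveQ n B bhat θbar Vbar i :=
    fun i => by rw [hg i, mul_div_cancel₀ _ (hV i).ne']
  have hP : ∑ i, activeP n B θ V i = ∑ i, activeP n B θbar Vbar i := by
    rw [sum_activeP_eq_zero n B hBsymm, sum_activeP_eq_zero n B hBsymm]
  rw [frequency_dissipation_eq kP ω ωstar _ _ Pstar uP uPbar ω0 (fun i => (hkP i).ne') hP huPbar,
    voltage_dissipation_eq LQ kQ V g _ _ uQ hVg]
  ring

/-- Incremental cyclo-dissipativity of the exponentially-scaled averaging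
reactive power (E-ARP) controller (Theorem 1, item 4); the voltage time constants are
taken equal to the identity. -/
theorem earp_incremental_cyclo_dissipativity
    (n : ℕ) (G : SimpleGraph (Fin n)) [DecidableRel G.Adj]
    (hconn : G.Connected)
    (B : Fin n → Fin n → ℝ)
    (hBsymm : ∀ i j, B i j = B j i)
    (hBpos : ∀ i j, G.Adj i j → 0 < B i j)
    (hBzero : ∀ i j, ¬ G.Adj i j → B i j = 0)
    (bhat : Fin n → ℝ) (hbhat : ∀ i, 0 ≤ bhat i)
    (kP TP kQ : Fin n → ℝ)
    (hkP : ∀ i, 0 < kP i) (hTP : ∀ i, 0 < TP i) (hkQ : ∀ i, 0 < kQ i)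
    (LQ : Matrix (Fin n) (Fin n) ℝ) (hLQ : LQ.PosSemidef)
    (ωstar Pstar : Fin n → ℝ)
    (θbar ωbar Vbar : Fin n → ℝ) (ω0 : ℝ)
    (hVbar : ∀ i, 0 < Vbar i)
    (hωbar : ωbar = fun _ => ω0)
    (uPbar uQbar : Fin n → ℝ)
    (huPbar : ∀ i, 0 = -(ωbar i - ωstar i)
        - kP i * (activeP n B θbar Vbar i - Pstar i) + uPbar i)
    (huQbar : uQbar
        = fun i => kQ i * (LQ *ᵥ fun j => kQ j * reactiveQ n B bhat θbar Vbar j) i)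
    (θ ω V uP uQ : Fin n → ℝ) (hV : ∀ i, 0 < V i)
    (g : Fin n → ℝ)
    (hg : ∀ i, g i = (reactiveQ n B bhat θ V i - reactiveQ n B bhat θbar Vbar i) / V i) :
    ∑ i, (activeP n B θ V i - activeP n B θbar Vbar i) * ω i
      + ∑ i, (ω i - ωbar i) * (kP i)⁻¹
          * (-(ω i - ωstar i) - kP i * (activeP n B θ V i - Pstar i) + uP i)
      + ∑ i, g i * (-(V i * (kQ i * (LQ *ᵥ fun j => kQ j * reactiveQ n B bhat θ V j) i))
          + V i * uQ i)
    =
    -∑ i, (ω i - ωbar i) * (kP i)⁻¹ * (ω i - ωbar i)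
      + ∑ i, (ω i - ωbar i) * (kP i)⁻¹ * (uP i - uPbar i)
      - ∑ i, (V i * (kQ i * g i)) * (LQ *ᵥ fun j => kQ j * (V j * g j)) i
      + ∑ i, g i * (V i * (uQ i - uQbar i)) :=
  earp_incremental_cyclo_dissipativity_general n B hBsymm bhat kP kQ hkP LQ ωstar Pstar θbar ωbar
    Vbar ω0 hωbar uPbar uQbar huPbar huQbar θ ω V uP uQ hV g hg
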